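/- For all locally compact groups G₁ and G₂, c_ub(G₁ × G₂) = min{c_ub(G₁), c_ub(G₂)}, where G₁ × G₂ carries the product topology. -/

import Mathlib

open scoped ENNReal
open MeasureTheory

structure HilbRep (G : Type*) [Group G] [TopologicalSpace G] where
  (space : Type*)
  [normedAddCommGroup : NormedAddCommGroup space]
  [innerProductSpace : InnerProductSpace ℂ space]
  [completeSpace : CompleteSpace space]
  toFun : G →* (space →L[ℂ] space)ˣ

attribute [instance] HilbRep.normedAddCommGroup HilbRep.innerProductSpace HilbRep.completeSpace

namespace HilbRep

variable {G : Type*} [Group G] [TopologicalSpace G]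

/-- The bounded invertible operator associated to a group element. -/
def op (π : HilbRep G) (s : G) : π.space →L[ℂ] π.space :=
  (π.toFun s : π.space →L[ℂ] π.space)

/-- The representation is uniformly bounded by `c`. -/
def IsUB (π : HilbRep G) (c : ℝ) : Prop := ∀ s : G, ‖π.op s‖ ≤ c

/-- The representation is continuous for the strong operator topology. -/
def IsSOTContinuous (π : HilbRep G) : Prop :=
  ∀ ξ : π.space, Continuous fun s : G => π.op s ξ

/-- `π ∈ R_c(G)`: strongly continuous and uniformly bounded by `c`. -/
def IsRc (π : HilbRep G) (c : ℝ) : Prop := π.IsUB c ∧ π.IsSOTContinuous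

/-- `π` almost has invariant vectors. -/
def AlmostInvariantVectors (π : HilbRep G) : Prop :=
  ∀ Q : Set G, IsCompact Q → ∀ ε : ℝ, 0 < ε →
    ∃ ξ : π.space, ∀ s ∈ Q, ‖π.op s ξ - ξ‖ < ε * ‖ξ‖

/-- `π` has a nonzero invariant vector. -/
def HasInvariantVector (π : HilbRep G) : Prop :=
  ∃ ξ : π.space, ξ ≠ 0 ∧ ∀ s : G, π.op s ξ = ξ

end HilbRep

universe u v

/-- Property (T)_c. -/
def HasPropertyT (G : Type u) [Group G] [TopologicalSpace G] (c : ℝ) : Prop :=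
  ∀ π : HilbRep.{u, v} G, π.IsRc c → π.AlmostInvariantVectors → π.HasInvariantVector

open Classical in
/-- The constant `c_ub(G) ∈ [1, ∞]`. -/
noncomputable def cUB (G : Type u) [Group G] [TopologicalSpace G] : ℝ≥0∞ :=
  if HasPropertyT.{u, v} G 1 then
    ⨆ (c : ℝ) (_ : 1 ≤ c ∧ HasPropertyT.{u, v} G c), ENNReal.ofReal c
  else 1

/-!
Property (T)_c passes to the quotients `G₁` and `G₂` of `G₁ × G₂`. Conversely, let `π ∈ R_c(G₁ × G₂)`
almost have invariant vectors and let `V` be the closed subspace of `G₁`-invariant vectors; as the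
two factors commute, `V` is `G₂`-invariant. The compression of `π|G₁` to `Vᗮ` has no nonzero
invariant vector: for a fixed `η`, `g ↦ π(g)η - η` is a bounded additive map `G₁ → V`, hence zero.
So Property (T)_c for `G₁` gives a spectral gap on `Vᗮ`, which forces almost invariant vectors of
`π` to lie close to `V`; their components in `V` are almost invariant for `π|G₂` restricted to `V`,
and Property (T)_c for `G₂` produces a nonzero vector of `V` fixed by `G₂`, hence by `G₁ × G₂`.
Since Property (T)_c is antitone in `c`, the two suprema defining `c_ub` combine into a minimum.
-/

theorem eq_zero_of_map_mul_of_norm_le {M E : Type*} [Monoid M] [NormedAddCommGroup E]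
    [NormedSpace ℝ E] {f : M → E} (hf : ∀ a b, f (a * b) = f a + f b) {C : ℝ}
    (hC : ∀ a, ‖f a‖ ≤ C) (a : M) : f a = 0 := by
  have hpow : ∀ n : ℕ, f (a ^ n) = n • f a := by
    intro n
    induction n with
    | zero => simpa using hf 1 1
    | succ n ih => rw [pow_succ, hf, ih, succ_nsmul]
  by_contra ha
  obtain ⟨n, hn⟩ := exists_nat_gt (C / ‖f a‖)
  have hCn := hC (a ^ n)
  rw [hpow, RCLike.norm_nsmul ℝ, nsmul_eq_mul] at hCn
  rw [div_lt_iff₀ (norm_pos_iff.2 ha)] at hn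
  linarith

theorem ContinuousLinearMap.norm_apply_sub_sub_lt {𝕜 E : Type*} [NontriviallyNormedField 𝕜]
    [SeminormedAddCommGroup E] [NormedSpace 𝕜 E] (T : E →L[𝕜] E) {x z : E} {ε : ℝ} (hε : 0 ≤ ε)
    (hz : ‖z‖ ≤ ‖x‖ / 2) (h : ‖T x - x‖ + (‖T‖ + 1) * ‖z‖ < ε / 2 * ‖x‖) :
    ‖T (x - z) - (x - z)‖ < ε * ‖x - z‖ :=
  calc ‖T (x - z) - (x - z)‖ = ‖(T x - x) - (T z - z)‖ := by rw [map_sub]; abel_nf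
    _ ≤ ‖T x - x‖ + (‖T z‖ + ‖z‖) := (norm_sub_le _ _).trans (add_le_add le_rfl (norm_sub_le _ _))
    _ ≤ ‖T x - x‖ + (‖T‖ + 1) * ‖z‖ := by have := T.le_opNorm z; linarith
    _ < ε / 2 * ‖x‖ := h
    _ ≤ ε * (‖x‖ - ‖z‖) := by nlinarith [mul_le_mul_of_nonneg_left hz hε]
    _ ≤ ε * ‖x - z‖ := by gcongr; exact norm_sub_norm_le _ _

theorem iSup_and_and_eq_min {ι α : Type*} [LinearOrder ι] [CompleteLinearOrder α] (f : ι → α)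
    (Q : ι → Prop) {P₁ P₂ : ι → Prop} (h₁ : Antitone P₁) (h₂ : Antitone P₂) :
    ⨆ (i) (_ : Q i ∧ P₁ i ∧ P₂ i), f i =
      min (⨆ (i) (_ : Q i ∧ P₁ i), f i) (⨆ (i) (_ : Q i ∧ P₂ i), f i) := by
  refine le_antisymm (le_min (biSup_mono fun i hi => ⟨hi.1, hi.2.1⟩)
    (biSup_mono fun i hi => ⟨hi.1, hi.2.2⟩)) (le_of_forall_lt fun x hx => ?_)
  simp only [lt_min_iff, lt_iSup_iff] at hx ⊢
  obtain ⟨⟨i, ⟨hQi, hPi⟩, hxi⟩, ⟨j, ⟨hQj, hPj⟩, hxj⟩⟩ := hx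
  rcases le_total i j with hij | hji
  · exact ⟨i, ⟨hQi, hPi, h₂ hij hPj⟩, hxi⟩
  · exact ⟨j, ⟨hQj, h₁ hji hPi, hPj⟩, hxj⟩

namespace HilbRep

section Basic

variable {G : Type*} [Group G] [TopologicalSpace G] (π : HilbRep G)

theorem op_mul (s t : G) (x : π.space) : π.op (s * t) x = π.op s (π.op t x) := by
  simp only [op, map_mul, Units.val_mul, mul_apply_eq_comp]

@[simp]
theorem op_one (x : π.space) : π.op 1 x = x := by
  simp only [op, map_one, Units.val_one, one_apply_eq_self]

theorem norm_op_apply_le {c : ℝ} (hπ : π.IsUB c) (s : G) (x : π.space) :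
    ‖π.op s x‖ ≤ c * ‖x‖ :=
  (π.op s).le_of_opNorm_le (hπ s) x

def invariants : Submodule ℂ π.space where
  carrier := {x | ∀ s, π.op s x = x}
  add_mem' hx hy s := by simp only [map_add, hx s, hy s]
  zero_mem' _ := map_zero _
  smul_mem' a x hx s := by simp only [map_smul, hx s]

theorem mem_invariants {x : π.space} : x ∈ π.invariants ↔ ∀ s, π.op s x = x :=
  Iff.rfl

theorem isClosed_invariants : IsClosed (π.invariants : Set π.space) := by
  simp only [invariants, Submodule.coe_set_mk, AddSubmonoid.coe_set_mk, AddSubsemigroup.coe_set_mk,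
    Set.ofPred_forall]
  exact isClosed_iInter fun s => isClosed_eq (π.op s).continuous continuous_id

theorem op_mem_invariants (s : G) {x : π.space} (hx : x ∈ π.invariants) :
    π.op s x ∈ π.invariants := by
  rwa [π.mem_invariants.1 hx s]

end Basic

section Comp

variable {G H : Type*} [Group G] [TopologicalSpace G] [Group H] [TopologicalSpace H]
  {π : HilbRep H} {f : G →* H}

variable (π f) in
abbrev comp : HilbRep G :=
  { space := π.space, toFun := π.toFun.comp f }

theorem IsRc.comp {c : ℝ} (hπ : π.IsRc c) (hf : Continuous f) : (π.comp f).IsRc c :=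
  ⟨fun s => hπ.1 (f s), fun x => (hπ.2 x).comp hf⟩

theorem AlmostInvariantVectors.comp (hπ : π.AlmostInvariantVectors) (hf : Continuous f) :
    (π.comp f).AlmostInvariantVectors := by
  intro Q hQ ε hε
  obtain ⟨x, hx⟩ := hπ (f '' Q) (hQ.image hf) ε hε
  exact ⟨x, fun s hs => hx (f s) (Set.mem_image_of_mem f hs)⟩

theorem HasInvariantVector.of_comp (hπ : (π.comp f).HasInvariantVector)
    (hf : Function.Surjective f) : π.HasInvariantVector := by
  obtain ⟨x, hx0, hx⟩ := hπ
  refine ⟨x, hx0, fun t => ?_⟩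
  obtain ⟨s, rfl⟩ := hf t
  exact hx s

end Comp

section Subspace

variable {G : Type*} [Group G] [TopologicalSpace G] (π : HilbRep G) {V : Submodule ℂ π.space}
  (hVc : IsClosed (V : Set π.space)) (hV : ∀ s, ∀ x ∈ V, π.op s x ∈ V)

noncomputable abbrev restrict : HilbRep G :=
  { space := V
    completeSpace := hVc.completeSpace_coe
    toFun := MonoidHom.toHomUnits
      { toFun s := (π.op s).restrict (hV s)
        map_one' := by ext x : 2; simp
        map_mul' s t := by ext x : 2; simp [op_mul] } }

include hVc hV in
theorem orthogonalProjection_op_orthogonalProjection (s : G) (x : π.space) :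
    Vᗮ.orthogonalProjectionOnto (π.op s (Vᗮ.orthogonalProjectionOnto x)) =
      Vᗮ.orthogonalProjectionOnto (π.op s x) := by
  have := hVc.completeSpace_coe
  have hVx : π.op s (V.starProjection x) ∈ Vᗮᗮ :=
    V.le_orthogonal_orthogonal (hV s _ (V.starProjection_apply_mem x))
  conv_rhs => rw [← V.starProjection_add_starProjection_orthogonal x]
  rw [map_add, map_add, Submodule.orthogonalProjectionOnto_eq_zero_iff.mpr hVx, zero_add,
    Submodule.starProjection_apply]

noncomputable abbrev compress : HilbRep G :=
  { space := Vᗮ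
    toFun := MonoidHom.toHomUnits
      { toFun s := Vᗮ.orthogonalProjectionOnto ∘L π.op s ∘L Vᗮ.subtypeL
        map_one' := by ext η : 1; simp
        map_mul' s t := by
          ext η : 1
          simp only [ContinuousLinearMap.comp_apply, mul_apply_eq_comp, op_mul]
          exact (orthogonalProjection_op_orthogonalProjection π hVc hV s _).symm } }

theorem compress_op_apply (s : G) (η : Vᗮ) :
    (π.compress hVc hV).op s η = Vᗮ.orthogonalProjectionOnto (π.op s η) :=
  rfl

theorem norm_compress_op_sub_le (s : G) (x : π.space) :
    ‖(π.compress hVc hV).op s (Vᗮ.orthogonalProjectionOnto x) - Vᗮ.orthogonalProjectionOnto x‖ ≤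
      ‖π.op s x - x‖ := by
  rw [compress_op_apply, orthogonalProjection_op_orthogonalProjection π hVc hV, ← map_sub]
  exact Vᗮ.norm_orthogonalProjectionOnto_apply_le _

theorem norm_orthogonalProjection_lt_of_gap {δ r : ℝ} (hδ : 0 < δ) {s : G}
    {x : π.space} (hgap : δ * ‖Vᗮ.orthogonalProjectionOnto x‖ ≤
      ‖(π.compress hVc hV).op s (Vᗮ.orthogonalProjectionOnto x) - Vᗮ.orthogonalProjectionOnto x‖)
    (hx : ‖π.op s x - x‖ < δ * r) : ‖Vᗮ.orthogonalProjectionOnto x‖ < r :=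
  lt_of_mul_lt_mul_left ((hgap.trans (π.norm_compress_op_sub_le hVc hV s x)).trans_lt hx) hδ.le

variable {π}

theorem IsRc.restrict {c : ℝ} (hπ : π.IsRc c) : (π.restrict hVc hV).IsRc c := by
  refine ⟨fun s => ?_, fun x => (hπ.2 (x : V)).subtype_mk _⟩
  refine (ContinuousLinearMap.opNorm_le_bound _ (norm_nonneg (π.op s)) fun x => ?_).trans (hπ.1 s)
  exact (π.op s).le_opNorm (x : V)

theorem IsRc.compress {c : ℝ} (hπ : π.IsRc c) : (π.compress hVc hV).IsRc c := by
  refine ⟨fun s => ?_, fun η => (Vᗮ.orthogonalProjectionOnto.continuous.comp (hπ.2 η))⟩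
  refine (ContinuousLinearMap.opNorm_le_bound _ (norm_nonneg (π.op s)) fun η => ?_).trans (hπ.1 s)
  exact (Vᗮ.norm_orthogonalProjectionOnto_apply_le _).trans ((π.op s).le_opNorm η)

end Subspace

theorem not_hasInvariantVector_compress_invariants {G : Type*} [Group G] [TopologicalSpace G]
    (π : HilbRep G) {c : ℝ} (hπ : π.IsUB c) :
    ¬ (π.compress π.isClosed_invariants fun s _ => π.op_mem_invariants s).HasInvariantVector := by
  rintro ⟨η, hη0, hη⟩
  set V := π.invariants
  have := π.isClosed_invariants.completeSpace_coe
  -- `s ↦ π s η - η` takes values in `V`, where `G` acts trivially: it is an additive map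
  let f : G → π.space := fun s => π.op s η - η
  have hfV : ∀ s, f s ∈ V := by
    intro s
    rw [← V.orthogonal_orthogonal, ← Submodule.orthogonalProjectionOnto_eq_zero_iff, map_sub,
      Submodule.orthogonalProjectionOnto_mem_subspace_eq_self]
    exact sub_eq_zero.2 (hη s)
  have hf : ∀ s t, f (s * t) = f s + f t := by
    intro s t
    have hft : π.op s (f t) = f t := π.mem_invariants.1 (hfV t) s
    rw [map_sub] at hft
    show π.op (s * t) η - η = f s + f t
    rw [op_mul, ← sub_add_sub_cancel _ (π.op s η), hft, add_comm]
  have hfC : ∀ s, ‖f s‖ ≤ c * ‖(η : π.space)‖ + ‖(η : π.space)‖ :=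
    fun s => (norm_sub_le _ _).trans (add_le_add_left (π.norm_op_apply_le hπ s _) _)
  have hηV : (η : π.space) ∈ V :=
    fun s => sub_eq_zero.1 (eq_zero_of_map_mul_of_norm_le hf hfC s)
  exact hη0 (Subtype.ext ((Submodule.mem_bot ℂ).1
    (V.inf_orthogonal_eq_bot ▸ Submodule.mem_inf.2 ⟨hηV, η.2⟩)))

section Prod

variable {G₁ G₂ : Type*} [Group G₁] [TopologicalSpace G₁] [Group G₂] [TopologicalSpace G₂]
  (π : HilbRep (G₁ × G₂))

theorem op_inr_mem_invariants_comp_inl (h : G₂) {x : π.space}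
    (hx : x ∈ (π.comp (.inl G₁ G₂)).invariants) :
    (π.comp (.inr G₁ G₂)).op h x ∈ (π.comp (.inl G₁ G₂)).invariants := by
  intro g
  have hcomm : ((g, 1) : G₁ × G₂) * (1, h) = (1, h) * (g, 1) := by simp
  show π.op (g, 1) (π.op (1, h) x) = π.op (1, h) x
  rw [← op_mul, hcomm, op_mul]
  exact congrArg _ (hx g)

theorem almostInvariantVectors_restrict_of_not_compress {c : ℝ} (hπ : π.IsUB c)
    (hAIV : π.AlmostInvariantVectors)
    (hgap : ¬ ((π.comp (.inl G₁ G₂)).compress (π.comp (.inl G₁ G₂)).isClosed_invariants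
      fun g _ => op_mem_invariants _ g).AlmostInvariantVectors) :
    ((π.comp (.inr G₁ G₂)).restrict (π.comp (.inl G₁ G₂)).isClosed_invariants
      fun h _ => π.op_inr_mem_invariants_comp_inl h).AlmostInvariantVectors := by
  intro Q hQ ε hε
  set V := (π.comp (.inl G₁ G₂)).invariants
  have := (π.comp (.inl G₁ G₂)).isClosed_invariants.completeSpace_coe
  set P := Vᗮ.orthogonalProjectionOnto
  simp only [AlmostInvariantVectors, not_forall, not_exists, not_lt] at hgap
  obtain ⟨K, hK, δ, hδ, hgap⟩ := hgap
  have hc : 0 ≤ c := (norm_nonneg _).trans (hπ 1)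
  -- `t` bounds the relative size of the component orthogonal to `V`
  set t := min (1 / 2) (ε / (2 * (δ + c + 1)))
  have ht : 0 < t := by positivity
  have ht_half : t ≤ 1 / 2 := min_le_left _ _
  have htε : t * (δ + c + 1) ≤ ε / 2 := by
    have := min_le_right (1 / 2) (ε / (2 * (δ + c + 1)))
    rw [le_div_iff₀ (by positivity)] at this
    linarith
  obtain ⟨ξ, hξ⟩ := hAIV (insert 1 K ×ˢ insert 1 Q) ((hK.insert 1).prod (hQ.insert 1)) (δ * t)
    (by positivity)
  obtain ⟨g, hgK, hg⟩ := hgap (P ξ)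
  have hPξ : ‖P ξ‖ < t * ‖ξ‖ := norm_orthogonalProjection_lt_of_gap _ _ _ hδ hg
    (by rw [← mul_assoc]; exact hξ (g, 1) ⟨Set.mem_insert_of_mem _ hgK, Set.mem_insert _ _⟩)
  have hVξ : (V.orthogonalProjectionOnto ξ : π.space) = ξ - P ξ :=
    eq_sub_of_add_eq (V.starProjection_add_starProjection_orthogonal ξ)
  refine ⟨V.orthogonalProjectionOnto ξ, fun h hh => ?_⟩
  have hξh := hξ (1, h) ⟨Set.mem_insert _ _, Set.mem_insert_of_mem _ hh⟩
  have hTh : ‖π.op (1, h)‖ + 1 ≤ c + 1 := by linarith [hπ (1, h)]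
  have hPξ_half : ‖P ξ‖ ≤ ‖ξ‖ / 2 := by nlinarith [norm_nonneg ξ]
  have hsmall : ‖π.op (1, h) ξ - ξ‖ + (‖π.op (1, h)‖ + 1) * ‖P ξ‖ < ε / 2 * ‖ξ‖ := by
    nlinarith [mul_le_mul_of_nonneg_right hTh (norm_nonneg (P ξ)),
      mul_le_mul_of_nonneg_right htε (norm_nonneg ξ)]
  have key := (π.op (1, h)).norm_apply_sub_sub_lt (z := P ξ) hε.le hPξ_half hsmall
  rw [← hVξ] at key
  exact key

theorem hasInvariantVector_of_restrict_comp_inr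
    (h : ((π.comp (.inr G₁ G₂)).restrict (π.comp (.inl G₁ G₂)).isClosed_invariants
      fun h _ => π.op_inr_mem_invariants_comp_inl h).HasInvariantVector) :
    π.HasInvariantVector := by
  obtain ⟨w, hw0, hw⟩ := h
  refine ⟨w, fun h => hw0 (Subtype.ext h), fun s => ?_⟩
  have hs : s = ((s.1, 1) : G₁ × G₂) * (1, s.2) := by simp
  have hw₂ : π.op (1, s.2) w = w := congrArg Subtype.val (hw s.2)
  rw [hs, op_mul, hw₂]
  exact w.2 s.1

end Prod

end HilbRep

theorem HasPropertyT.antitone (G : Type u) [Group G] [TopologicalSpace G] :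
    Antitone (HasPropertyT.{u, v} G) :=
  fun _ _ hcc' hT π hπ => hT π ⟨fun s => (hπ.1 s).trans hcc', hπ.2⟩

universe w

theorem HasPropertyT.of_surjective {G : Type u} {H : Type w} [Group G] [TopologicalSpace G]
    [Group H] [TopologicalSpace H] {c : ℝ} (hT : HasPropertyT.{u, v} G c) (f : G →* H)
    (hf : Continuous f) (hsurj : Function.Surjective f) : HasPropertyT.{w, v} H c :=
  fun π hπ hAIV => (hT (π.comp f) (hπ.comp hf) (hAIV.comp hf)).of_comp hsurj

theorem HasPropertyT.prod {G₁ G₂ : Type u} [Group G₁] [TopologicalSpace G₁] [Group G₂]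
    [TopologicalSpace G₂] {c : ℝ} (h₁ : HasPropertyT.{u, v} G₁ c)
    (h₂ : HasPropertyT.{u, v} G₂ c) : HasPropertyT.{u, v} (G₁ × G₂) c := by
  intro π hπ hAIV
  have hπ₁ : (π.comp (.inl G₁ G₂)).IsRc c := hπ.comp (continuous_id.prodMk continuous_const)
  have hπ₂ : (π.comp (.inr G₁ G₂)).IsRc c := hπ.comp (continuous_const.prodMk continuous_id)
  have hgap := fun hAIV₁ => (π.comp (.inl G₁ G₂)).not_hasInvariantVector_compress_invariants hπ₁.1
    (h₁ _ (hπ₁.compress _ _) hAIV₁)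
  exact π.hasInvariantVector_of_restrict_comp_inr (h₂ _ (hπ₂.restrict _ _)
    (π.almostInvariantVectors_restrict_of_not_compress hπ.1 hAIV hgap))

theorem hasPropertyT_prod_iff {G₁ G₂ : Type u} [Group G₁] [TopologicalSpace G₁] [Group G₂]
    [TopologicalSpace G₂] {c : ℝ} :
    HasPropertyT.{u, v} (G₁ × G₂) c ↔ HasPropertyT.{u, v} G₁ c ∧ HasPropertyT.{u, v} G₂ c :=
  ⟨fun h => ⟨h.of_surjective (.fst G₁ G₂) continuous_fst Prod.fst_surjective,
      h.of_surjective (.snd G₁ G₂) continuous_snd Prod.snd_surjective⟩,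
    fun h => h.1.prod h.2⟩

section cUB

variable {G : Type u} [Group G] [TopologicalSpace G]

theorem cUB_of_hasPropertyT_one (h : HasPropertyT.{u, v} G 1) :
    cUB.{u, v} G = ⨆ (c : ℝ) (_ : 1 ≤ c ∧ HasPropertyT.{u, v} G c), ENNReal.ofReal c :=
  if_pos h

theorem cUB_of_not_hasPropertyT_one (h : ¬ HasPropertyT.{u, v} G 1) : cUB.{u, v} G = 1 :=
  if_neg h

theorem one_le_cUB : 1 ≤ cUB.{u, v} G := by
  by_cases h : HasPropertyT.{u, v} G 1
  · rw [cUB_of_hasPropertyT_one h]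
    exact le_iSup₂_of_le 1 ⟨le_rfl, h⟩ ENNReal.ofReal_one.ge
  · rw [cUB_of_not_hasPropertyT_one h]

end cUB

theorem cUB_prod_general {G₁ : Type u} {G₂ : Type u}
    [Group G₁] [TopologicalSpace G₁]
    [Group G₂] [TopologicalSpace G₂] :
    cUB.{u, v} (G₁ × G₂) = min (cUB.{u, v} G₁) (cUB.{u, v} G₂) := by
  by_cases h₁ : HasPropertyT.{u, v} G₁ 1
  · by_cases h₂ : HasPropertyT.{u, v} G₂ 1
    · rw [cUB_of_hasPropertyT_one h₁, cUB_of_hasPropertyT_one h₂,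
        cUB_of_hasPropertyT_one (hasPropertyT_prod_iff.2 ⟨h₁, h₂⟩)]
      simp_rw [hasPropertyT_prod_iff]
      exact iSup_and_and_eq_min _ _ (HasPropertyT.antitone G₁) (HasPropertyT.antitone G₂)
    · rw [cUB_of_not_hasPropertyT_one h₂, min_eq_right one_le_cUB,
        cUB_of_not_hasPropertyT_one fun h => h₂ (hasPropertyT_prod_iff.1 h).2]
  · rw [cUB_of_not_hasPropertyT_one h₁, min_eq_left one_le_cUB,
      cUB_of_not_hasPropertyT_one fun h => h₁ (hasPropertyT_prod_iff.1 h).1]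

theorem cUB_prod {G₁ : Type u} {G₂ : Type u}
    [Group G₁] [TopologicalSpace G₁] [IsTopologicalGroup G₁] [LocallyCompactSpace G₁]
    [Group G₂] [TopologicalSpace G₂] [IsTopologicalGroup G₂] [LocallyCompactSpace G₂] :
    cUB.{u, v} (G₁ × G₂) = min (cUB.{u, v} G₁) (cUB.{u, v} G₂) :=
  cUB_prod_general
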